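/- For every n ≥ 1, the number of orbits of SL(2, ZMod 2) acting by left multiplication on 2×n matrices over ZMod 2 equals (2^n + 1)(2^(n-1) + 1)/3. -/
import Mathlib

open MulAction

/-- The orbit of a `2 × n` matrix over `ZMod 2` under left multiplication by `SL(2, ZMod 2)`. -/
def slOrbit (n : ℕ) (M : Matrix (Fin 2) (Fin n) (ZMod 2)) :
    Set (Matrix (Fin 2) (Fin n) (ZMod 2)) :=
  { N | ∃ S : Matrix.SpecialLinearGroup (Fin 2) (ZMod 2),
      (S : Matrix (Fin 2) (Fin 2) (ZMod 2)) * M = N }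

abbrev G2 := Matrix.SpecialLinearGroup (Fin 2) (ZMod 2)
abbrev Mat2 (n : ℕ) := Matrix (Fin 2) (Fin n) (ZMod 2)

instance : DecidableEq G2 := fun a b =>
  decidable_of_iff (a.1 = b.1) ⟨fun h => Subtype.ext h, fun h => congrArg Subtype.val h⟩

instance matSMul (n : ℕ) : SMul G2 (Mat2 n) :=
  ⟨fun S M => (S : Matrix (Fin 2) (Fin 2) (ZMod 2)) * M⟩

lemma g2_smul_def {n} (S : G2) (M : Mat2 n) :
    S • M = (S : Matrix (Fin 2) (Fin 2) (ZMod 2)) * M := rfl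

instance matMulAction (n : ℕ) : MulAction G2 (Mat2 n) where
  one_smul M := by simp [g2_smul_def]
  mul_smul S T M := by simp [g2_smul_def, Matrix.mul_assoc]

lemma slOrbit_eq_orbit {n : ℕ} (M : Mat2 n) : slOrbit n M = MulAction.orbit G2 M := by
  ext N
  simp only [slOrbit, Set.mem_setOf_eq, MulAction.mem_orbit_iff, g2_smul_def]

/-- number of fixed vectors of `g` -/
def fvc (g : G2) : ℕ :=
  Fintype.card {v : Fin 2 → ZMod 2 // (g : Matrix (Fin 2) (Fin 2) (ZMod 2)).mulVec v = v}

/-- Fixed matrices are tuples of fixed columns. -/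
def fixedByEquiv (n : ℕ) (g : G2) :
    fixedBy (Mat2 n) g ≃
      (Fin n → {v : Fin 2 → ZMod 2 // (g : Matrix (Fin 2) (Fin 2) (ZMod 2)).mulVec v = v}) where
  toFun M := fun j => ⟨fun i => M.1 i j, by
    funext i
    have h : (g : Matrix (Fin 2) (Fin 2) (ZMod 2)) * M.1 = M.1 := M.2
    have := congrFun (congrFun h i) j
    simpa [Matrix.mulVec, Matrix.mul_apply, dotProduct] using this⟩
  invFun f := ⟨Matrix.of fun i j => (f j).1 i, by
    simp only [MulAction.mem_fixedBy, g2_smul_def]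
    ext i j
    have := congrFun (f j).2 i
    simpa [Matrix.mulVec, Matrix.mul_apply, dotProduct] using this⟩
  left_inv M := rfl
  right_inv f := rfl

lemma card_fixedBy (n : ℕ) (g : G2) : Fintype.card (fixedBy (Mat2 n) g) = fvc g ^ n := by
  rw [Fintype.card_congr (fixedByEquiv n g), Fintype.card_fun, fvc, Fintype.card_fin]

def gA : G2 := ⟨!![1,0;0,1], by decide⟩
def gB : G2 := ⟨!![0,1;1,0], by decide⟩
def gC : G2 := ⟨!![1,1;0,1], by decide⟩
def gD : G2 := ⟨!![1,0;1,1], by decide⟩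
def gE : G2 := ⟨!![0,1;1,1], by decide⟩
def gF : G2 := ⟨!![1,1;1,0], by decide⟩

lemma four_pow_succ_mod (m : ℕ) : ∃ t, (4 : ℕ) ^ m = 3 * t + 1 := by
  induction m with
  | zero => exact ⟨0, rfl⟩
  | succ k ih => obtain ⟨t, ht⟩ := ih; exact ⟨4 * t + 1, by rw [pow_succ, ht]; ring⟩

lemma univ_eq : (Finset.univ : Finset G2) = {gA, gB, gC, gD, gE, gF} := by decide

lemma sum_fvc (n : ℕ) : ∑ g : G2, fvc g ^ n = 4 ^ n + 3 * 2 ^ n + 2 := by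
  rw [univ_eq]
  rw [Finset.sum_insert (by decide), Finset.sum_insert (by decide),
    Finset.sum_insert (by decide), Finset.sum_insert (by decide),
    Finset.sum_insert (by decide), Finset.sum_singleton]
  have hA : fvc gA = 4 := by decide
  have hB : fvc gB = 2 := by decide
  have hC : fvc gC = 2 := by decide
  have hD : fvc gD = 2 := by decide
  have hE : fvc gE = 1 := by decide
  have hF : fvc gF = 1 := by decide
  rw [hA, hB, hC, hD, hE, hF]
  simp [one_pow]; ring

theorem card_orbits_two (n : ℕ) (hn : 1 ≤ n) :
    Nat.card { O : Set (Matrix (Fin 2) (Fin n) (ZMod 2)) // ∃ M, O = slOrbit n M } =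
      (2 ^ n + 1) * (2 ^ (n - 1) + 1) / 3 := by
  classical
  have hΩfin : Fintype (orbitRel.Quotient G2 (Mat2 n)) := Fintype.ofFinite _
  -- Burnside
  have hBurn : (∑ g : G2, Fintype.card (fixedBy (Mat2 n) g))
      = Fintype.card (orbitRel.Quotient G2 (Mat2 n)) * Fintype.card G2 :=
    MulAction.sum_card_fixedBy_eq_card_orbits_mul_card_group G2 (Mat2 n)
  have hG : Fintype.card G2 = 6 := by decide
  have hsum : (∑ g : G2, Fintype.card (fixedBy (Mat2 n) g)) = 4 ^ n + 3 * 2 ^ n + 2 := by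
    simp_rw [card_fixedBy]; exact sum_fvc n
  -- identify the orbit set with the quotient
  have hequiv : Nat.card { O : Set (Mat2 n) // ∃ M, O = slOrbit n M }
      = Fintype.card (orbitRel.Quotient G2 (Mat2 n)) := by
    rw [← Nat.card_eq_fintype_card]
    refine Nat.card_congr (Equiv.symm ?_)
    refine Equiv.ofBijective
      (Quotient.lift (fun M => (⟨slOrbit n M, M, rfl⟩ :
          { O : Set (Mat2 n) // ∃ M, O = slOrbit n M })) ?_) ⟨?_, ?_⟩
    · intro a b hab
      have : a ∈ MulAction.orbit G2 b := hab
      simp only [Subtype.mk.injEq, slOrbit_eq_orbit]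
      exact MulAction.orbit_eq_iff.2 this
    · rintro ⟨a⟩ ⟨b⟩ h
      have h' : slOrbit n a = slOrbit n b := congrArg Subtype.val h
      rw [slOrbit_eq_orbit, slOrbit_eq_orbit] at h'
      exact Quotient.sound (MulAction.orbit_eq_iff.1 h')
    · rintro ⟨O, M, rfl⟩
      exact ⟨Quotient.mk _ M, rfl⟩
  rw [hequiv]
  obtain ⟨m, rfl⟩ : ∃ m, n = m + 1 := ⟨n - 1, (Nat.succ_pred_eq_of_pos hn).symm⟩
  simp only [Nat.add_sub_cancel]
  have key : Fintype.card (orbitRel.Quotient G2 (Mat2 (m + 1))) * 6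
      = 4 ^ (m + 1) + 3 * 2 ^ (m + 1) + 2 := by rw [← hG, ← hBurn, hsum]
  have e1 : (2 : ℕ) ^ (m + 1) = 2 * 2 ^ m := by rw [pow_succ]; ring
  have e2 : (4 : ℕ) ^ (m + 1) = (2 * 2 ^ m) * (2 * 2 ^ m) := by
    rw [show (4 : ℕ) = 2 * 2 from rfl, mul_pow, ← e1]
  have h2P : 2 * ((2 ^ (m + 1) + 1) * (2 ^ m + 1)) = 4 ^ (m + 1) + 3 * 2 ^ (m + 1) + 2 := by
    rw [e1, e2]; ring
  obtain ⟨t, ht⟩ := four_pow_succ_mod m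
  have hP3 : (2 ^ (m + 1) + 1) * (2 ^ m + 1) = 3 * (2 * t + 2 ^ m + 1) := by
    have : (2 : ℕ) ^ (m + 1) = 2 * 2 ^ m := by rw [pow_succ]; ring
    rw [this]
    have h4m : (2 : ℕ) ^ m * 2 ^ m = 4 ^ m := by
      rw [show (4 : ℕ) = 2 * 2 from rfl, mul_pow]
    nlinarith [h4m, ht]
  omega
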